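/- Let K be a field of characteristic ≠ 2,3, Δ ∈ K*, L = K[δ] with δ² = −3Δ, and let z = x+yδ ∈ L* satisfy N(z) = x²+3Δy² = P³ with P ∈ K*. If y ≠ 0, then the binary cubic g with coefficients (a,b,c,d) = (2y/3, 0, −P/2y, x/6y²) has discriminant Δ, seminvariant U(g) = 2x, and seminvariant P(g) = P; if y = 0, the cubic with coefficients (0, x/P, 0, −Δ/4x) has discriminant Δ. -/

import Mathlib

/-- Discriminant of the binary cubic `aX³+bX²Y+cXY²+dY³`. -/
def cubicDisc {K : Type*} [CommRing K] (a b c d : K) : K :=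
  b^2*c^2 - 4*a*c^3 - 4*b^3*d - 27*a^2*d^2 + 18*a*b*c*d

/-- Seminvariant `P = b²−3ac` of the binary cubic `aX³+bX²Y+cXY²+dY³`. -/
def semP {K : Type*} [CommRing K] (a b c : K) : K := b^2 - 3*a*c

/-- Seminvariant `U = 2b³+27a²d−9abc` of the binary cubic `aX³+bX²Y+cXY²+dY³`. -/
def semU {K : Type*} [CommRing K] (a b c d : K) : K := 2*b^3 + 27*a^2*d - 9*a*b*c

/-!
For `y ≠ 0` the cubic has `b = 0`, so `P = −3ac` and `U = 27a²d` are read off directly, and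
the syzygy `4P³ − U² = 27a²·disc` turns the norm equation `4P³ − 4x² = 12Δy²` into
`disc = Δ`. For `y = 0` the norm equation reads `x² = P³`, so `x ≠ 0` and
`disc = −4b³d = x²Δ/P³ = Δ`.
-/

theorem four_mul_semP_pow_three_sub_semU_sq {K : Type*} [CommRing K] (a b c d : K) :
    4 * semP a b c ^ 3 - semU a b c d ^ 2 = 27 * a ^ 2 * cubicDisc a b c d := by
  unfold semP semU cubicDisc
  ring

theorem cubicDisc_zero_zero {K : Type*} [CommRing K] (b d : K) :
    cubicDisc 0 b 0 d = -4 * b ^ 3 * d := by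
  unfold cubicDisc
  ring

section CardanoCubic

variable {K : Type*} [Field K] (h2 : (2:K) ≠ 0) (h3 : (3:K) ≠ 0) {P x y : K} (hy : y ≠ 0)
include h2 h3 hy

theorem semP_cardanoCubic : semP (2*y/3) 0 (-P/(2*y)) = P := by
  unfold semP
  field_simp
  ring

theorem semU_cardanoCubic : semU (2*y/3) 0 (-P/(2*y)) (x/(6*y^2)) = 2*x := by
  have h6 : (6:K) ≠ 0 := by simpa [show (6:K) = 2 * 3 by norm_num] using mul_ne_zero h2 h3
  unfold semU
  field_simp
  ring

theorem cubicDisc_cardanoCubic :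
    cubicDisc (2*y/3) 0 (-P/(2*y)) (x/(6*y^2)) = (P^3 - x^2) / (3*y^2) := by
  have h4 : (4:K) ≠ 0 := by simpa [show (4:K) = 2 * 2 by norm_num] using mul_ne_zero h2 h2
  have hsyz := four_mul_semP_pow_three_sub_semU_sq (2*y/3) 0 (-P/(2*y)) (x/(6*y^2))
  rw [semP_cardanoCubic h2 h3 hy, semU_cardanoCubic h2 h3 hy] at hsyz
  rw [eq_div_iff (by positivity)]
  have h27 : 27 * (2*y/3) ^ 2 = 4 * (3 * y ^ 2) := by field_simp; ring
  rw [h27] at hsyz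
  apply mul_left_cancel₀ h4
  linear_combination -hsyz

end CardanoCubic

theorem cardano_invariant_surjective_construction_general {K : Type*} [Field K]
    (h2 : (2:K) ≠ 0) (h3 : (3:K) ≠ 0)
    (Δ P x y : K) (hP : P ≠ 0)
    (hnorm : x^2 + 3*Δ*y^2 = P^3) :
    (y ≠ 0 →
      cubicDisc (2*y/3) 0 (-P/(2*y)) (x/(6*y^2)) = Δ ∧
      semU (2*y/3) 0 (-P/(2*y)) (x/(6*y^2)) = 2*x ∧
      semP (2*y/3) 0 (-P/(2*y)) = P)
    ∧ (y = 0 → cubicDisc 0 (x/P) 0 (-Δ/(4*x)) = Δ) := by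
  refine ⟨fun hy => ⟨?_, semU_cardanoCubic h2 h3 hy, semP_cardanoCubic h2 h3 hy⟩, fun hy => ?_⟩
  · rw [cubicDisc_cardanoCubic h2 h3 hy, ← hnorm]
    field_simp
    ring
  · subst hy
    have hx : x ≠ 0 := by
      rintro rfl
      exact hP (pow_eq_zero_iff three_ne_zero |>.mp (by simpa using hnorm.symm))
    have h4 : (4:K) ≠ 0 := by simpa [show (4:K) = 2 * 2 by norm_num] using mul_ne_zero h2 h2
    rw [cubicDisc_zero_zero]
    field_simp
    linear_combination Δ * hnorm

/-- Surjectivity construction for the Cardano invariant: if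
`x² + 3Δy² = P³` with `Δ, P ∈ K*`, then for `y ≠ 0` the binary cubic with
coefficients `(2y/3, 0, −P/2y, x/6y²)` has discriminant `Δ`, `U = 2x` and
seminvariant `P`; and for `y = 0` the cubic with coefficients
`(0, x/P, 0, −Δ/4x)` has discriminant `Δ`. -/
theorem cardano_invariant_surjective_construction {K : Type*} [Field K]
    (h2 : (2:K) ≠ 0) (h3 : (3:K) ≠ 0)
    (Δ P x y : K) (hΔ : Δ ≠ 0) (hP : P ≠ 0)
    (hnorm : x^2 + 3*Δ*y^2 = P^3) :
    (y ≠ 0 →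
      cubicDisc (2*y/3) 0 (-P/(2*y)) (x/(6*y^2)) = Δ ∧
      semU (2*y/3) 0 (-P/(2*y)) (x/(6*y^2)) = 2*x ∧
      semP (2*y/3) 0 (-P/(2*y)) = P)
    ∧ (y = 0 → cubicDisc 0 (x/P) 0 (-Δ/(4*x)) = Δ) :=
  cardano_invariant_surjective_construction_general h2 h3 Δ P x y hP hnorm
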